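/- Suppose Assumptions H4 and H5 hold, let φ(x) = ∫₀^x ds/σ(s) (which is a smooth increasing bijection of ℝ with smooth inverse φ⁻¹), and set v₀ = 𝔠₀ ∘ φ⁻¹. Then v₀ is smooth and all its derivatives are uniformly bounded on ℝ: for every n ≥ 1, sup_{y∈ℝ} |v₀^{(n)}(y)| < ∞. -/

import Mathlib

noncomputable section
open Set Filter
open scoped ENNReal NNReal ContDiff Topology

/-- Assumption H4 on the diffusion coefficient: `σ` is smooth, positive, with bounded
derivatives; `σ = σ₀ σ_b` with `σ₀(q) = |q|^{γ/2}` for `|q| ≥ 1`, `0 ≤ γ ≤ 1/2`, and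
`σ_b` smooth and bounded with bounded derivatives, `0 < δ₋ ≤ σ_b ≤ δ₊`; moreover
`|σ^{(n)}(q)| ≤ S_n |q|^{γ/2 - n}` for `|q| ≥ 1`, for every `n ≥ 1`. -/
def HypH4 (σ σ0 σb : ℝ → ℝ) (γ δm δp : ℝ) : Prop :=
  ContDiff ℝ (⊤ : ℕ∞) σ ∧ (∀ q, 0 < σ q) ∧
  (∀ n : ℕ, 1 ≤ n → ∃ C : ℝ, ∀ q, |iteratedDeriv n σ q| ≤ C) ∧
  (∀ q, σ q = σ0 q * σb q) ∧
  0 ≤ γ ∧ γ ≤ 1 / 2 ∧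
  (∀ q : ℝ, 1 ≤ |q| → σ0 q = |q| ^ (γ / 2)) ∧
  ContDiff ℝ (⊤ : ℕ∞) σb ∧
  (∀ n : ℕ, 1 ≤ n → ∃ C : ℝ, ∀ q, |iteratedDeriv n σb q| ≤ C) ∧
  0 < δm ∧ (∀ q, δm ≤ σb q ∧ σb q ≤ δp) ∧
  (∀ n : ℕ, 1 ≤ n → ∃ S : ℝ,
    ∀ q : ℝ, 1 ≤ |q| → |iteratedDeriv n σ q| ≤ S * |q| ^ (γ / 2 - (n : ℝ)))

/-- Assumption H5 on the initial condition: `𝔠₀` is smooth and bounded and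
`‖𝔠₀^{(n)} σ₀^n‖_{C⁰} ≤ R_n` for every `n ≥ 1`. -/
def HypH5 (c0 σ0 : ℝ → ℝ) : Prop :=
  ContDiff ℝ (⊤ : ℕ∞) c0 ∧ (∃ C : ℝ, ∀ q, |c0 q| ≤ C) ∧
  ∀ n : ℕ, 1 ≤ n → ∃ R : ℝ, ∀ q, |iteratedDeriv n c0 q| * |σ0 q| ^ n ≤ R

/-- `c` is a classical solution of the Cauchy problem
`∂_t 𝔠 = (1/2) σ(q)² ∂²_q 𝔠`, `𝔠(0, ·) = 𝔠₀`, on `ℝ₊ × ℝ`. -/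
def IsDiffSolution (σ c0 : ℝ → ℝ) (c : ℝ → ℝ → ℝ) : Prop :=
  (∀ q, c 0 q = c0 q) ∧
  (∀ t ∈ Ici (0 : ℝ), ContDiff ℝ 2 (fun q => c t q)) ∧
  ContinuousOn (fun p : ℝ × ℝ => c p.1 p.2) (Ici 0 ×ˢ univ) ∧
  ∀ t ∈ Ici (0 : ℝ), ∀ q : ℝ,
    HasDerivWithinAt (fun s => c s q)
      ((1 / 2) * (σ q) ^ 2 * iteratedDeriv 2 (fun x => c t x) q) (Ici 0) t

/-- The Lamperti change of variable `φ(x) = ∫₀^x ds/σ(s)`. -/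
def lamperti (σ : ℝ → ℝ) : ℝ → ℝ := fun x => ∫ s in (0 : ℝ)..x, 1 / σ s

/-- The sequence of functions obtained by repeated application of `σ ∂` to `c0`. -/
def vfun (σ c0 : ℝ → ℝ) : ℕ → ℝ → ℝ
  | 0 => c0
  | n+1 => fun x => σ x * deriv (vfun σ c0 n) x

theorem vfun_contDiff {σ c0 : ℝ → ℝ} (hσ : ContDiff ℝ (⊤ : ℕ∞) σ) (hc : ContDiff ℝ (⊤ : ℕ∞) c0) :
    ∀ n, ContDiff ℝ (⊤ : ℕ∞) (vfun σ c0 n) := by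
  intro n
  induction n with
  | zero => exact hc
  | succ n IH =>
    have hder : ContDiff ℝ (⊤ : ℕ∞) (deriv (vfun σ c0 n)) := by
      exact (contDiff_infty_iff_deriv.1 IH).2
    exact hσ.mul hder

/-- The key uniform bounds on the iterated derivatives of `vfun`. -/
theorem vfun_bound {σ c0 : ℝ → ℝ} {γ : ℝ} (hγ0 : 0 ≤ γ) (hγ1 : γ ≤ 1/2)
    (hσ : ContDiff ℝ (⊤ : ℕ∞) σ) (hc : ContDiff ℝ (⊤ : ℕ∞) c0)
    (hσbd : ∀ i : ℕ, ∃ C, 0 ≤ C ∧ ∀ x : ℝ,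
      |iteratedDeriv i σ x| ≤ C * (max |x| 1) ^ (γ/2 - (i:ℝ)))
    (hcbd0 : ∃ C, ∀ x : ℝ, |c0 x| ≤ C)
    (hcbd : ∀ k : ℕ, 1 ≤ k → ∃ C, 0 ≤ C ∧ ∀ x : ℝ,
      |iteratedDeriv k c0 x| ≤ C * (max |x| 1) ^ (-(k:ℝ) * (γ/2))) :
    ∀ n j : ℕ, ∃ C, 0 ≤ C ∧ ∀ x : ℝ,
      |iteratedDeriv j (vfun σ c0 n) x| ≤ C * (max |x| 1) ^ (-(j:ℝ) * (γ/2)) := by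
  have hρ1 : ∀ x : ℝ, (1:ℝ) ≤ max |x| 1 := fun x => le_max_right _ _
  have hρ0 : ∀ x : ℝ, (0:ℝ) < max |x| 1 := fun x => lt_of_lt_of_le one_pos (hρ1 x)
  intro n
  induction n with
  | zero =>
    intro j
    match j with
    | 0 =>
      obtain ⟨C, hC⟩ := hcbd0
      refine ⟨C, le_trans (abs_nonneg _) (hC 0), fun x => ?_⟩
      have : (-(0:ℕ) * (γ/2) : ℝ) = 0 := by norm_num
      rw [this, Real.rpow_zero, mul_one, iteratedDeriv_zero]
      exact hC x
    | (j+1) =>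
      obtain ⟨C, hC0, hC⟩ := hcbd (j+1) (Nat.succ_le_succ (Nat.zero_le j))
      exact ⟨C, hC0, hC⟩
  | succ n IH =>
    intro j
    choose D hD0 hD using IH
    choose A hA0 hA using hσbd
    set ρ : ℝ → ℝ := fun x => max |x| 1 with hρ
    refine ⟨∑ i ∈ Finset.range (j+1), (j.choose i : ℝ) * A i * D (j - i + 1),
      Finset.sum_nonneg fun i _ =>
        mul_nonneg (mul_nonneg (Nat.cast_nonneg _) (hA0 i)) (hD0 _), fun x => ?_⟩
    have hg : ContDiff ℝ (⊤ : ℕ∞) (deriv (vfun σ c0 n)) := by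
      have := vfun_contDiff hσ hc n
      exact (contDiff_infty_iff_deriv.1 this).2
    have heq : |iteratedDeriv j (vfun σ c0 (n+1)) x|
        = ‖iteratedFDeriv ℝ j (fun y => σ y * deriv (vfun σ c0 n) y) x‖ := by
      rw [norm_iteratedFDeriv_eq_norm_iteratedDeriv, Real.norm_eq_abs]
      rfl
    rw [heq]
    refine le_trans (norm_iteratedFDeriv_mul_le hσ hg x (by exact_mod_cast le_top)) ?_
    rw [Finset.sum_mul]
    apply Finset.sum_le_sum
    intro i hi
    have hij : i ≤ j := Nat.lt_succ_iff.1 (Finset.mem_range.1 hi)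
    have h1 : ‖iteratedFDeriv ℝ i σ x‖ ≤ A i * ρ x ^ (γ/2 - (i:ℝ)) := by
      rw [norm_iteratedFDeriv_eq_norm_iteratedDeriv, Real.norm_eq_abs]
      exact hA i x
    have h2 : ‖iteratedFDeriv ℝ (j - i) (deriv (vfun σ c0 n)) x‖
        ≤ D (j - i + 1) * ρ x ^ (-((j - i + 1 : ℕ):ℝ) * (γ/2)) := by
      rw [norm_iteratedFDeriv_eq_norm_iteratedDeriv, Real.norm_eq_abs,
        ← iteratedDeriv_succ']
      exact hD (j - i + 1) x
    have hexp : ρ x ^ (γ/2 - (i:ℝ)) * ρ x ^ (-((j - i + 1 : ℕ):ℝ) * (γ/2))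
        ≤ ρ x ^ (-(j:ℝ) * (γ/2)) := by
      rw [← Real.rpow_add (hρ0 x)]
      apply Real.rpow_le_rpow_of_exponent_le (hρ1 x)
      have hcast : ((j - i + 1 : ℕ) : ℝ) = (j:ℝ) - (i:ℝ) + 1 := by
        push_cast [Nat.cast_sub hij]
        ring
      rw [hcast]
      have hi0 : (0:ℝ) ≤ (i:ℝ) := Nat.cast_nonneg i
      nlinarith
    calc (j.choose i : ℝ) * ‖iteratedFDeriv ℝ i σ x‖
          * ‖iteratedFDeriv ℝ (j - i) (deriv (vfun σ c0 n)) x‖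
        ≤ (j.choose i : ℝ) * (A i * ρ x ^ (γ/2 - (i:ℝ)))
          * (D (j - i + 1) * ρ x ^ (-((j - i + 1 : ℕ):ℝ) * (γ/2))) := by
          apply mul_le_mul ?_ h2 (norm_nonneg _)
            (mul_nonneg (Nat.cast_nonneg _)
              (mul_nonneg (hA0 i) (Real.rpow_nonneg (hρ0 x).le _)))
          apply mul_le_mul_of_nonneg_left h1 (Nat.cast_nonneg _)
      _ = ((j.choose i : ℝ) * A i * D (j - i + 1))
          * (ρ x ^ (γ/2 - (i:ℝ)) * ρ x ^ (-((j - i + 1 : ℕ):ℝ) * (γ/2))) := by ring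
      _ ≤ ((j.choose i : ℝ) * A i * D (j - i + 1)) * ρ x ^ (-(j:ℝ) * (γ/2)) := by
          apply mul_le_mul_of_nonneg_left hexp
            (mul_nonneg (mul_nonneg (Nat.cast_nonneg _) (hA0 i)) (hD0 _))

/-- Under H4 and H5, with `φ⁻¹` the inverse of the smooth increasing bijection
`φ(x) = ∫₀^x ds/σ(s)`, the function `v₀ = 𝔠₀ ∘ φ⁻¹` is smooth and all its derivatives
are uniformly bounded on `ℝ`. -/
theorem stmt18 (σ σ0 σb c0 : ℝ → ℝ) (γ δm δp : ℝ)
    (h4 : HypH4 σ σ0 σb γ δm δp) (h5 : HypH5 c0 σ0)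
    (φinv : ℝ → ℝ) (hinv1 : ∀ x, φinv (lamperti σ x) = x)
    (hinv2 : ∀ y, lamperti σ (φinv y) = y) :
    ContDiff ℝ (⊤ : ℕ∞) (fun y => c0 (φinv y)) ∧
    ∀ n : ℕ, 1 ≤ n → ∃ C : ℝ,
      ∀ y : ℝ, |iteratedDeriv n (fun z => c0 (φinv z)) y| ≤ C := by
  obtain ⟨hσsm, hσpos, hσball, hfact, hγ0, hγ1, hσ0eq, hσbsm, hσbball, hδm, hδbd, hσS⟩ := h4
  obtain ⟨hcsm, hcbd0, hcR⟩ := h5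
  have hδp : 0 < δp := lt_of_lt_of_le hδm ((hδbd 0).1.trans (hδbd 0).2)
  -- derivative of lamperti
  have hinvσcont : Continuous (fun s => 1 / σ s) :=
    continuous_const.div hσsm.continuous (fun x => (hσpos x).ne')
  have hlam : ∀ x : ℝ, HasDerivAt (lamperti σ) (1 / σ x) x := by
    intro x
    exact (hinvσcont.integral_hasStrictDerivAt 0 x).hasDerivAt
  have hlamc : Continuous (lamperti σ) := by
    have : Differentiable ℝ (lamperti σ) := fun x => (hlam x).differentiableAt
    exact this.continuous
  -- strict monotonicity and surjectivity
  have hsm : StrictMono (lamperti σ) := by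
    apply strictMono_of_deriv_pos
    intro x
    rw [(hlam x).deriv]
    exact one_div_pos.2 (hσpos x)
  have hsurj : Function.Surjective (lamperti σ) := fun y => ⟨φinv y, hinv2 y⟩
  -- continuity of φinv
  have hφc : Continuous φinv := by
    set e := StrictMono.orderIsoOfSurjective (lamperti σ) hsm hsurj with he
    have hcoe : (e : ℝ → ℝ) = lamperti σ := StrictMono.coe_orderIsoOfSurjective _ _ _
    have hφeq : ∀ y, φinv y = e.symm y := by
      intro y
      apply hsm.injective
      have h1 : lamperti σ (e.symm y) = y := by
        conv_lhs => rw [← hcoe]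
        exact e.apply_symm_apply y
      rw [hinv2 y, h1]
    have hsc : Continuous (e.symm : ℝ → ℝ) := OrderIso.continuous e.symm
    exact hsc.congr (fun y => (hφeq y).symm)
  -- φinv is smooth (indeed analytic)
  have hφsm : ContDiff ℝ (⊤ : ℕ∞) φinv := by
    have hlamCD : ContDiff ℝ (⊤ : ℕ∞) (lamperti σ) := by
      rw [contDiff_infty_iff_deriv]
      refine ⟨fun x => (hlam x).differentiableAt, ?_⟩
      have hdl : deriv (lamperti σ) = fun x => 1 / σ x := funext fun x => (hlam x).deriv
      rw [hdl]
      exact contDiff_const.div hσsm fun x => (hσpos x).ne'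
    set eh : ℝ ≃ₜ ℝ :=
      { toFun := lamperti σ
        invFun := φinv
        left_inv := hinv1
        right_inv := hinv2
        continuous_toFun := hlamc
        continuous_invFun := hφc } with heh
    set f := eh.toOpenPartialHomeomorph with hf
    rw [contDiff_iff_contDiffAt]
    intro y
    have hsymm : (f.symm : ℝ → ℝ) = φinv := rfl
    have hfy : (f.symm y : ℝ) = φinv y := rfl
    have hd : HasDerivAt (lamperti σ) (1 / σ (φinv y)) (φinv y) := hlam (φinv y)
    have hne : (1 / σ (φinv y)) ≠ 0 := one_div_ne_zero (hσpos (φinv y)).ne'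
    have hfd := hd.hasFDerivAt_equiv hne
    have := f.contDiffAt_symm (a := y) (n := ((⊤ : ℕ∞) : WithTop ℕ∞))
      (f₀' := ContinuousLinearEquiv.unitsEquivAut ℝ (Units.mk0 _ hne))
      (by exact Set.mem_univ _)
      (by rw [hfy]; exact hfd)
      (hlamCD.contDiffAt)
    rw [hsymm] at this
    exact this
  have hφd : ∀ y : ℝ, HasDerivAt φinv (σ (φinv y)) y := by
    intro y
    have h := HasDerivAt.of_local_left_inverse (hφc.continuousAt)
      (hlam (φinv y)) (one_div_ne_zero (hσpos (φinv y)).ne')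
      (Eventually.of_forall hinv2)
    rwa [one_div, inv_inv] at h
  -- smoothness of the composition
  refine ⟨hcsm.comp hφsm, ?_⟩
  -- chain rule: iterated derivatives of the composition
  have hvCD := vfun_contDiff hσsm hcsm
  have hchain : ∀ n : ℕ,
      iteratedDeriv n (fun z => c0 (φinv z)) = fun y => vfun σ c0 n (φinv y) := by
    intro n
    induction n with
    | zero => simp [vfun]
    | succ n IH =>
      rw [iteratedDeriv_succ, IH]
      funext y
      have hv : HasDerivAt (vfun σ c0 n) (deriv (vfun σ c0 n) (φinv y)) (φinv y) :=
        (((hvCD n).differentiable (by simp)) (φinv y)).hasDerivAt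
      have hcomp := hv.comp y (hφd y)
      have : deriv (fun z => vfun σ c0 n (φinv z)) y
          = deriv (vfun σ c0 n) (φinv y) * σ (φinv y) := hcomp.deriv
      rw [this]
      show _ = σ (φinv y) * deriv (vfun σ c0 n) (φinv y)
      ring
  -- bounds on σ's iterated derivatives
  have hσbd : ∀ i : ℕ, ∃ C, 0 ≤ C ∧ ∀ x : ℝ,
      |iteratedDeriv i σ x| ≤ C * (max |x| 1) ^ (γ/2 - (i:ℝ)) := by
    intro i
    match i with
    | 0 =>
      obtain ⟨M, hM⟩ := isCompact_Icc.exists_bound_of_continuousOn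
        (s := Icc (-1:ℝ) 1) hσsm.continuous.continuousOn
      refine ⟨max M δp, le_max_of_le_right hδp.le, fun x => ?_⟩
      rw [iteratedDeriv_zero]
      have hexp : (γ/2 - ((0:ℕ):ℝ)) = γ/2 := by norm_num
      rw [hexp]
      rcases le_total |x| 1 with hx | hx
      · have hmax : max |x| 1 = 1 := max_eq_right hx
        rw [hmax, Real.one_rpow, mul_one]
        have := hM x (abs_le.1 hx |>.imp (fun h => h) (fun h => h) |> fun _ => abs_le.1 hx)
        have h2 : ‖σ x‖ ≤ M := hM x ⟨(abs_le.1 hx).1, (abs_le.1 hx).2⟩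
        rw [Real.norm_eq_abs] at h2
        exact h2.trans (le_max_left _ _)
      · have hmax : max |x| 1 = |x| := max_eq_left hx
        rw [hmax]
        have h1 : σ x = |x| ^ (γ/2) * σb x := by rw [hfact x, hσ0eq x hx]
        have h2 : |σ x| = σ x := abs_of_pos (hσpos x)
        rw [h2, h1]
        have h3 : |x| ^ (γ/2) * σb x ≤ |x| ^ (γ/2) * δp :=
          mul_le_mul_of_nonneg_left (hδbd x).2 (Real.rpow_nonneg (abs_nonneg x) _)
        refine h3.trans ?_
        rw [mul_comm]
        apply mul_le_mul_of_nonneg_right (le_max_right _ _)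
          (Real.rpow_nonneg (abs_nonneg x) _)
    | (i+1) =>
      obtain ⟨C1, hC1⟩ := hσball (i+1) (Nat.succ_le_succ (Nat.zero_le i))
      obtain ⟨S, hS⟩ := hσS (i+1) (Nat.succ_le_succ (Nat.zero_le i))
      refine ⟨max C1 S, le_max_of_le_left (le_trans (abs_nonneg _) (hC1 0)), fun x => ?_⟩
      rcases le_total |x| 1 with hx | hx
      · have hmax : max |x| 1 = 1 := max_eq_right hx
        rw [hmax, Real.one_rpow, mul_one]
        exact (hC1 x).trans (le_max_left _ _)
      · have hmax : max |x| 1 = |x| := max_eq_left hx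
        rw [hmax]
        refine (hS x hx).trans ?_
        apply mul_le_mul_of_nonneg_right (le_max_right _ _)
          (Real.rpow_nonneg (abs_nonneg x) _)
  -- bounds on c0's iterated derivatives
  have hcbd : ∀ k : ℕ, 1 ≤ k → ∃ C, 0 ≤ C ∧ ∀ x : ℝ,
      |iteratedDeriv k c0 x| ≤ C * (max |x| 1) ^ (-(k:ℝ) * (γ/2)) := by
    intro k hk
    obtain ⟨R, hR⟩ := hcR k hk
    have hR0 : 0 ≤ R := le_trans (by positivity) (hR 0)
    -- lower bound on |σ0| on [-1, 1]
    obtain ⟨x₀, hx₀mem, hx₀min⟩ := isCompact_Icc.exists_isMinOn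
      (s := Icc (-1:ℝ) 1) ⟨0, by norm_num⟩ hσsm.continuous.continuousOn
    set ε : ℝ := σ x₀ / δp with hε
    have hε0 : 0 < ε := div_pos (hσpos x₀) hδp
    have hεle : ∀ x : ℝ, |x| ≤ 1 → ε ≤ |σ0 x| := by
      intro x hx
      have hσbx := hδbd x
      have hσbx0 : 0 < σb x := lt_of_lt_of_le hδm hσbx.1
      have hσ0x : σ0 x = σ x / σb x := by
        field_simp
        rw [← hfact x]
      rw [hσ0x, abs_of_pos (div_pos (hσpos x) hσbx0)]
      exact div_le_div₀ (hσpos x).le (hx₀min ⟨(abs_le.1 hx).1, (abs_le.1 hx).2⟩)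
        hσbx0 hσbx.2
    refine ⟨max (R / ε^k) R, le_max_of_le_right hR0, fun x => ?_⟩
    rcases le_total |x| 1 with hx | hx
    · have hmax : max |x| 1 = 1 := max_eq_right hx
      rw [hmax, Real.one_rpow, mul_one]
      have h1 : |iteratedDeriv k c0 x| * ε^k ≤ R := by
        refine le_trans ?_ (hR x)
        apply mul_le_mul_of_nonneg_left (pow_le_pow_left₀ hε0.le (hεle x hx) k)
          (abs_nonneg _)
      have h2 : |iteratedDeriv k c0 x| ≤ R / ε^k := by
        rw [le_div_iff₀ (by positivity)]
        exact h1
      exact h2.trans (le_max_left _ _)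
    · have hmax : max |x| 1 = |x| := max_eq_left hx
      rw [hmax]
      have hx0 : (0:ℝ) < |x| := lt_of_lt_of_le one_pos hx
      have hσ0x : |σ0 x| = |x| ^ (γ/2) := by
        rw [hσ0eq x hx, abs_of_nonneg (Real.rpow_nonneg (abs_nonneg x) _)]
      have hpow : |σ0 x| ^ k = |x| ^ ((k:ℝ) * (γ/2)) := by
        rw [hσ0x, ← Real.rpow_natCast (|x| ^ (γ/2)) k, ← Real.rpow_mul (abs_nonneg x)]
        ring_nf
      have hpos : (0:ℝ) < |x| ^ ((k:ℝ) * (γ/2)) := Real.rpow_pos_of_pos hx0 _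
      have h1 : |iteratedDeriv k c0 x| ≤ R / |x| ^ ((k:ℝ) * (γ/2)) := by
        rw [le_div_iff₀ hpos, ← hpow]
        exact hR x
      have h2 : R / |x| ^ ((k:ℝ) * (γ/2)) = R * |x| ^ (-(k:ℝ) * (γ/2)) := by
        rw [div_eq_mul_inv, ← Real.rpow_neg (abs_nonneg x)]
        ring_nf
      rw [h2] at h1
      refine h1.trans ?_
      apply mul_le_mul_of_nonneg_right (le_max_right _ _)
        (Real.rpow_nonneg (abs_nonneg x) _)
  -- conclude
  intro n _
  obtain ⟨C, hC0, hC⟩ := vfun_bound hγ0 hγ1 hσsm hcsm hσbd hcbd0 hcbd n 0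
  refine ⟨C, fun y => ?_⟩
  rw [hchain n]
  have h1 : |vfun σ c0 n (φinv y)| = |iteratedDeriv 0 (vfun σ c0 n) (φinv y)| := by
    rw [iteratedDeriv_zero]
  have h2 := hC (φinv y)
  rw [← h1] at h2
  have h3 : (-(0:ℕ) * (γ/2) : ℝ) = 0 := by norm_num
  rw [h3, Real.rpow_zero, mul_one] at h2
  exact h2
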